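/- arXiv:2001.00126 — 2 statements merged into one kernel-verified Lean document; each statement's English description precedes it below -/
import Mathlib

section
/- Let K be an imaginary quadratic field of discriminant D with ring of integers ℤ[γ], where γ ≠ √-1 and γ ≠ (1+√-3)/2. Let f be a positive integer, ℓ a prime dividing f, and v_ℓ(f) the ℓ-adic valuation of f. Then the number niG(f, ℓ^n) of non-invertible ideals of norm ℓ^n in the order ℤ + ℤfγ satisfies niG(f, ℓ^n) = Σ_{1 ≤ k ≤ min(n, v_ℓ(f))} iG(f/ℓ^k, ℓ^{n-k}), where iG(f', ℓ^m) denotes the number of invertible ideals of norm ℓ^m in the order of conductor f', with the convention that the number of invertible ideals of norm 1 is 1. -/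
/-- The Kronecker symbol `(D/ℓ)` for a prime `ℓ`: the Legendre symbol for odd
`ℓ`, and for `ℓ = 2` the character `χ₈` (`0` if `D` is even, `1` if
`D ≡ ±1 (mod 8)`, `-1` if `D ≡ ±3 (mod 8)`). -/
noncomputable def kroneckerAtPrime (D : ℤ) (ℓ : ℕ) [Fact ℓ.Prime] : ℤ :=
  if ℓ = 2 then ZMod.χ₈ (D : ZMod 8) else legendreSym ℓ D

/-- The order `ℤ + ℤfγ = ℤ[fγ]` of conductor `f` in the imaginary quadratic
field `K` with ring of integers `ℤ[γ]`. -/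
def quadOrder (K : Type) [Field K] (γ : K) (f : ℕ) : Subalgebra ℤ K :=
  Algebra.adjoin ℤ {(f : K) * γ}

/-- An integral ideal `I` of the order `O = ℤ + ℤfγ` is invertible iff
`{α ∈ K : αI ⊆ I} = O`. -/
def IsInvertibleIdeal (K : Type) [Field K] (γ : K) (f : ℕ)
    (I : Ideal (quadOrder K γ f)) : Prop :=
  {x : K | ∀ y : quadOrder K γ f, y ∈ I →
      x * (y : K) ∈ (Subtype.val '' (I : Set (quadOrder K γ f)) : Set K)} =
    (quadOrder K γ f : Set K)

/-- `iG K γ f ℓ n` is the number of invertible ideals of norm `ℓ^n` in the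
order of conductor `f` of `K`, the norm of an ideal `I` of an order `O` being
the index `[O : I]`. -/
noncomputable def iG (K : Type) [Field K] (γ : K) (f ℓ n : ℕ) : ℕ :=
  Nat.card {I : Ideal (quadOrder K γ f) //
    IsInvertibleIdeal K γ f I ∧ Nat.card (↥(quadOrder K γ f) ⧸ I) = ℓ ^ n}

/-- `niG K γ f ℓ n` is the number of non-invertible ideals of norm `ℓ^n` in
the order of conductor `f` of `K`. -/
noncomputable def niG (K : Type) [Field K] (γ : K) (f ℓ n : ℕ) : ℕ :=
  Nat.card {I : Ideal (quadOrder K γ f) //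
    ¬ IsInvertibleIdeal K γ f I ∧ Nat.card (↥(quadOrder K γ f) ⧸ I) = ℓ ^ n}

/-!
Write `γ² = tγ - m`, `O_d = ℤ[dγ]` and `N` for the norm. An ideal of finite index in `O_d` is
`c·(aℤ + (b + dγ)ℤ)` for a unique triple with `0 ≤ b < a` and `a ∣ N(b + dγ)`; its norm is `c²a`,
and it is invertible exactly when the content `g = gcd(a, 2b + dt, N(b + dγ)/a)` of the associated
binary quadratic form is `1`. The element `(b + dγ)/g` multiplies the ideal into itself, so it is
integral and hence lies in `ℤ[γ]`: this gives `g ∣ b` and `g ∣ d`. Dividing `a` and `b` by `g`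
thus matches the ideals of norm `g·s` and content `g` in `O_d` with the invertible ideals of
norm `s` in `O_{d/g}`. For norm `ℓⁿ` the content of a non-invertible ideal is `ℓᵏ` with
`1 ≤ k ≤ min(n, v_ℓ(d))`.
-/

theorem mem_adjoin_singleton_iff_of_mul_self_eq {A : Type*} [CommRing A] {w : A} {T N : ℤ}
    (hw : w * w = T * w - N) (x : A) :
    x ∈ Algebra.adjoin ℤ {w} ↔ ∃ u v : ℤ, x = u + v * w := by
  constructor
  · intro hx
    induction hx using Algebra.adjoin_induction with
    | mem y hy =>
      rw [Set.mem_singleton_iff.mp hy]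
      exact ⟨0, 1, by push_cast; ring⟩
    | algebraMap r => exact ⟨r, 0, by simp⟩
    | add x y _ _ ihx ihy =>
      obtain ⟨u, v, rfl⟩ := ihx
      obtain ⟨u', v', rfl⟩ := ihy
      exact ⟨u + u', v + v', by push_cast; ring⟩
    | mul x y _ _ ihx ihy =>
      obtain ⟨u, v, rfl⟩ := ihx
      obtain ⟨u', v', rfl⟩ := ihy
      exact ⟨u * u' - v * v' * N, u * v' + u' * v + v * v' * T, by
        push_cast; linear_combination (v : A) * v' * hw⟩
  · rintro ⟨u, v, rfl⟩
    exact add_mem (Subalgebra.intCast_mem _ u)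
      (mul_mem (Subalgebra.intCast_mem _ v) (Algebra.self_mem_adjoin_singleton ℤ w))

theorem Int.exists_pos_forall_mem_iff_dvd (H : AddSubgroup ℤ) {n : ℤ} (hn : n ≠ 0) (hnH : n ∈ H) :
    ∃ a : ℕ, 0 < a ∧ ∀ u, u ∈ H ↔ (a : ℤ) ∣ u := by
  obtain ⟨g, rfl⟩ := Int.subgroup_cyclic H
  simp only [← AddSubgroup.zmultiples_eq_closure, Int.mem_zmultiples_iff] at hnH ⊢
  refine ⟨g.natAbs, Int.natAbs_pos.2 ?_, fun u => Int.natAbs_dvd.symm⟩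
  rintro rfl
  exact hn (zero_dvd_iff.1 hnH)

theorem Int.dvd_of_dvd_mul_of_gcd_gcd_eq_one {a u v x : ℤ} (h : Int.gcd a (Int.gcd u v) = 1)
    (hu : a ∣ x * u) (hv : a ∣ x * v) : a ∣ x := by
  refine Int.dvd_of_dvd_mul_left_of_gcd_one (c := Int.gcd u v) ?_ h
  rw [Int.gcd_eq_gcd_ab u v, mul_add, ← mul_assoc, ← mul_assoc]
  exact dvd_add (hu.mul_right _) (hv.mul_right _)

theorem Ideal.natCast_card_quotient_mem {R : Type*} [CommRing R] (I : Ideal R) :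
    (Nat.card (R ⧸ I) : R) ∈ I := by
  rw [← Ideal.Quotient.eq_zero_iff_mem, map_natCast, ← nsmul_one]
  exact card_nsmul_eq_zero'

theorem isInvertibleIdeal_iff_subset (K : Type) [Field K] (γ : K) (f : ℕ)
    (I : Ideal (quadOrder K γ f)) :
    IsInvertibleIdeal K γ f I ↔
      {x : K | ∀ y : quadOrder K γ f, y ∈ I →
        x * (y : K) ∈ (Subtype.val '' (I : Set (quadOrder K γ f)) : Set K)} ⊆ quadOrder K γ f :=
  ⟨fun h => h.le, fun h => h.antisymm fun x hx y hy => ⟨⟨x, hx⟩ * y, I.mul_mem_left _ hy, rfl⟩⟩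

/-- `ℤ[γ]` is the ring of integers of `K`, and `γ² = tγ - m`. -/
structure QuadGenerator (K : Type) [Field K] where
  γ : K
  t : ℤ
  m : ℤ
  mul_self_eq : γ * γ = t * γ - m
  eq_zero_of_add_mul_eq_zero : ∀ u v : ℤ, (u : K) + v * γ = 0 → u = 0 ∧ v = 0
  mem_adjoin_of_isIntegral : ∀ x : K, IsIntegral ℤ x → x ∈ Algebra.adjoin ℤ {γ}

namespace QuadGenerator

open Finset

lemma charZero {K : Type} [Field K] (C : QuadGenerator K) : CharZero K :=
  charZero_of_inj_zero fun n hn => by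
    simpa using (C.eq_zero_of_add_mul_eq_zero n 0 (by simpa using hn)).1

variable {K : Type} [Field K] (C : QuadGenerator K) (d : ℕ)

def gen : K := d * C.γ

lemma gen_mul_self :
    C.gen d * C.gen d = ((d * C.t : ℤ) : K) * C.gen d - ((d ^ 2 * C.m : ℤ) : K) := by
  unfold gen; push_cast; linear_combination (d : K) ^ 2 * C.mul_self_eq

lemma mem_quadOrder_iff (x : K) : x ∈ quadOrder K C.γ d ↔ ∃ u v : ℤ, x = u + v * C.gen d :=
  mem_adjoin_singleton_iff_of_mul_self_eq (C.gen_mul_self d) x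

def elem (u v : ℤ) : quadOrder K C.γ d :=
  ⟨u + v * C.gen d, (C.mem_quadOrder_iff d _).2 ⟨u, v, rfl⟩⟩

/-- `C.norm d b` is the norm of `b + dγ`. -/
def norm (b : ℤ) : ℤ := b ^ 2 + d * C.t * b + d ^ 2 * C.m

def hnfIdeal (a b c : ℕ) : Ideal (quadOrder K C.γ d) :=
  Ideal.span {C.elem d (c * a) 0, C.elem d (c * b) c}

/-- The bounds `< s + 1` follow from the other conditions and only make this a `Finset`. -/
def hnfTriples (s : ℕ) : Finset (ℕ × ℕ × ℕ) :=
  {τ ∈ range (s + 1) ×ˢ range (s + 1) ×ˢ range (s + 1) |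
    τ.2.1 < τ.1 ∧ 0 < τ.2.2 ∧ τ.2.2 ^ 2 * τ.1 = s ∧ (τ.1 : ℤ) ∣ C.norm d τ.2.1}

/-- The content of the binary quadratic form `a X² + (2b + dt) XY + (N(b + dγ)/a) Y²`; the
division is exact for the triples that matter, those with `a ∣ N(b + dγ)`. -/
def content (a b : ℕ) : ℕ := Int.gcd a (Int.gcd (2 * b + d * C.t) (C.norm d b / a))

variable {d}

@[simp] lemma coe_elem (u v : ℤ) : (C.elem d u v : K) = u + v * C.gen d := rfl

lemma exists_eq_elem (x : quadOrder K C.γ d) : ∃ u v : ℤ, x = C.elem d u v := by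
  obtain ⟨u, v, h⟩ := (C.mem_quadOrder_iff d x).1 x.2
  exact ⟨u, v, Subtype.ext h⟩

lemma elem_inj (hd : d ≠ 0) {u v u' v' : ℤ} :
    C.elem d u v = C.elem d u' v' ↔ u = u' ∧ v = v' := by
  refine ⟨fun h => ?_, fun h => by rw [h.1, h.2]⟩
  have h0 := C.eq_zero_of_add_mul_eq_zero (u - u') ((v - v') * d) (by
    have := congrArg Subtype.val h
    simp only [coe_elem, gen] at this
    push_cast
    linear_combination this)
  have hd' : (d : ℤ) ≠ 0 := by exact_mod_cast hd
  exact ⟨sub_eq_zero.1 h0.1, sub_eq_zero.1 ((mul_eq_zero.1 h0.2).resolve_right hd')⟩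

lemma elem_add (u v u' v' : ℤ) :
    C.elem d u v + C.elem d u' v' = C.elem d (u + u') (v + v') :=
  Subtype.ext (by simp only [Subalgebra.coe_add, coe_elem]; push_cast; ring)

lemma elem_sub (u v u' v' : ℤ) :
    C.elem d u v - C.elem d u' v' = C.elem d (u - u') (v - v') :=
  Subtype.ext (by simp only [Subalgebra.coe_sub, coe_elem]; push_cast; ring)

lemma neg_elem (u v : ℤ) : -C.elem d u v = C.elem d (-u) (-v) :=
  Subtype.ext (by simp only [NegMemClass.coe_neg, coe_elem]; push_cast; ring)

lemma elem_mul (u v u' v' : ℤ) :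
    C.elem d u v * C.elem d u' v' =
      C.elem d (u * u' - v * v' * (d ^ 2 * C.m)) (u * v' + u' * v + v * v' * (d * C.t)) := by
  refine Subtype.ext ?_
  have h := C.gen_mul_self d
  simp only [Subalgebra.coe_mul, coe_elem]
  push_cast at h ⊢
  linear_combination (v : K) * v' * h

lemma intCast_eq_elem (u : ℤ) : (u : quadOrder K C.γ d) = C.elem d u 0 :=
  Subtype.ext (by simp)

lemma zsmul_elem (n u v : ℤ) : n • C.elem d u v = C.elem d (n * u) (n * v) := by
  rw [zsmul_eq_mul, intCast_eq_elem, elem_mul]; congr 1 <;> ring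

lemma elem_zero_zero : C.elem d 0 0 = 0 :=
  Subtype.ext (by simp)

variable {a b c : ℕ}

lemma mem_hnfIdeal_iff (hab : (a : ℤ) ∣ C.norm d b) (x : quadOrder K C.γ d) :
    x ∈ C.hnfIdeal d a b c ↔ ∃ p q : ℤ, x = C.elem d (c * (p * a + q * b)) (q * c) := by
  obtain ⟨e, he⟩ := hab
  let L : Ideal (quadOrder K C.γ d) :=
    { carrier := {x | ∃ p q : ℤ, x = C.elem d (c * (p * a + q * b)) (q * c)}
      zero_mem' := ⟨0, 0, by simp [elem_zero_zero]⟩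
      add_mem' := by
        rintro _ _ ⟨p, q, rfl⟩ ⟨p', q', rfl⟩
        exact ⟨p + p', q + q', by rw [elem_add]; congr 1 <;> ring⟩
      smul_mem' := by
        rintro y _ ⟨p, q, rfl⟩
        obtain ⟨u, v, rfl⟩ := C.exists_eq_elem y
        refine ⟨u * p - v * (p * b + q * e), u * q + v * (p * a + q * (b + d * C.t)), ?_⟩
        rw [smul_eq_mul, elem_mul]
        unfold norm at he
        congr 1
        · linear_combination (-(v * q * c)) * he
        · ring }
  suffices C.hnfIdeal d a b c = L by rw [this]; rfl
  refine le_antisymm ?_ fun x ⟨p, q, hx⟩ => ?_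
  · rw [hnfIdeal, Ideal.span_le]
    rintro x (rfl | rfl)
    · exact ⟨1, 0, by congr 1 <;> ring⟩
    · exact ⟨0, 1, by congr 1 <;> ring⟩
  · have : x = (p : quadOrder K C.γ d) * C.elem d (c * a) 0 +
        (q : quadOrder K C.γ d) * C.elem d (c * b) c := by
      rw [hx, intCast_eq_elem, intCast_eq_elem, elem_mul, elem_mul, elem_add]
      congr 1 <;> ring
    rw [this]
    exact add_mem (Ideal.mul_mem_left _ _ (Ideal.subset_span (by simp)))
      (Ideal.mul_mem_left _ _ (Ideal.subset_span (by simp)))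

lemma elem_mem_hnfIdeal_iff (hd : d ≠ 0) (hab : (a : ℤ) ∣ C.norm d b) (u v : ℤ) :
    C.elem d u v ∈ C.hnfIdeal d a b c ↔ ∃ q : ℤ, v = q * c ∧ (c * a : ℤ) ∣ u - q * (c * b) := by
  rw [C.mem_hnfIdeal_iff hab]
  constructor
  · rintro ⟨p, q, h⟩
    obtain ⟨hu, hv⟩ := (C.elem_inj hd).1 h
    exact ⟨q, hv, p, by rw [hu]; ring⟩
  · rintro ⟨q, hv, p, hp⟩
    exact ⟨p, q, (C.elem_inj hd).2 ⟨by linear_combination hp, hv⟩⟩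

lemma card_quotient_hnfIdeal (hd : d ≠ 0) (hab : (a : ℤ) ∣ C.norm d b) (ha : 0 < a)
    (hc : 0 < c) : Nat.card (quadOrder K C.γ d ⧸ C.hnfIdeal d a b c) = c ^ 2 * a := by
  let φ : Fin (c * a) × Fin c → quadOrder K C.γ d ⧸ C.hnfIdeal d a b c :=
    fun ij => Submodule.Quotient.mk (C.elem d ij.1 ij.2)
  have hφ : Function.Bijective φ := by
    constructor
    · rintro ⟨i, j⟩ ⟨i', j'⟩ h
      have hmem := (Submodule.Quotient.eq _).1 h
      rw [elem_sub, C.elem_mem_hnfIdeal_iff hd hab] at hmem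
      obtain ⟨q, hq, hdvd⟩ := hmem
      have hj : (j : ℤ) - j' = 0 := Int.eq_zero_of_abs_lt_dvd ⟨q, hq.trans (mul_comm _ _)⟩
        (by have := j.2; have := j'.2; rw [abs_lt]; constructor <;> omega)
      obtain rfl : q = 0 := by
        rw [hj] at hq
        exact (mul_eq_zero.1 hq.symm).resolve_right (by omega)
      have hi : (i : ℤ) - i' = 0 := Int.eq_zero_of_abs_lt_dvd (by simpa using hdvd)
        (by have := i.2; have := i'.2; rw [abs_lt]; constructor <;> omega)
      ext <;> dsimp only <;> omega
    · intro y
      obtain ⟨x, rfl⟩ := Submodule.Quotient.mk_surjective _ y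
      obtain ⟨u, v, rfl⟩ := C.exists_eq_elem x
      have hc' : (0 : ℤ) < c := by exact_mod_cast hc
      have hca : (0 : ℤ) < c * a := by positivity
      have hr := Int.emod_nonneg v hc'.ne'
      have hr' := Int.emod_lt_of_pos v hc'
      have hs := Int.emod_nonneg (u - v / c * (c * b)) hca.ne'
      have hs' := Int.emod_lt_of_pos (u - v / c * (c * b)) hca
      refine ⟨(⟨((u - v / c * (c * b)) % (c * a)).toNat, by omega⟩,
        ⟨(v % c).toNat, by omega⟩), (Submodule.Quotient.eq _).2 ?_⟩
      simp only [Int.toNat_of_nonneg hr, Int.toNat_of_nonneg hs, elem_sub]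
      rw [C.elem_mem_hnfIdeal_iff hd hab]
      refine ⟨-(v / c), ?_, -((u - v / c * (c * b)) / (c * a)), ?_⟩ <;>
        (rw [Int.emod_def]; ring)
  rw [← Nat.card_eq_of_bijective φ hφ]
  simp only [Nat.card_eq_fintype_card, Fintype.card_prod, Fintype.card_fin]
  ring

@[simp] lemma mem_hnfTriples {s : ℕ} :
    (a, b, c) ∈ C.hnfTriples d s ↔ b < a ∧ 0 < c ∧ c ^ 2 * a = s ∧ (a : ℤ) ∣ C.norm d b := by
  simp only [hnfTriples, mem_filter, mem_product, mem_range, and_iff_right_iff_imp]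
  rintro ⟨hba, hc, rfl, -⟩
  have : a ≤ c ^ 2 * a := Nat.le_mul_of_pos_left a (by positivity)
  have : c ≤ c ^ 2 * a := by nlinarith
  omega

lemma exists_elem_mem_iff {I : Ideal (quadOrder K C.γ d)} {s : ℤ} (hs : s ≠ 0)
    (hsI : (s : quadOrder K C.γ d) ∈ I) :
    ∃ A B c : ℕ, B < A ∧ 0 < c ∧
      ∀ u v : ℤ, C.elem d u v ∈ I ↔ ∃ q : ℤ, v = q * c ∧ (A : ℤ) ∣ u - q * B := by
  let H₁ : AddSubgroup ℤ := I.toAddSubgroup.comap (Int.castAddHom _)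
  have hH₁ (u : ℤ) : u ∈ H₁ ↔ C.elem d u 0 ∈ I := by
    rw [← intCast_eq_elem]; rfl
  let H₂ : AddSubgroup ℤ :=
    { carrier := {v | ∃ u, C.elem d u v ∈ I}
      zero_mem' := ⟨0, by rw [elem_zero_zero]; exact zero_mem I⟩
      add_mem' := fun ⟨u, hu⟩ ⟨u', hu'⟩ => ⟨u + u', by rw [← elem_add]; exact add_mem hu hu'⟩
      neg_mem' := fun ⟨u, hu⟩ => ⟨-u, by rw [← neg_elem]; exact neg_mem hu⟩ }
  obtain ⟨A, hA, hA₁⟩ := Int.exists_pos_forall_mem_iff_dvd H₁ hs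
    ((hH₁ s).2 (by rwa [← intCast_eq_elem]))
  obtain ⟨c, hc, hc₂⟩ := Int.exists_pos_forall_mem_iff_dvd H₂ hs
    ⟨0, by simpa [intCast_eq_elem, elem_mul] using I.mul_mem_right (C.elem d 0 1) hsI⟩
  have hAI : C.elem d A 0 ∈ I := (hH₁ A).1 ((hA₁ A).2 dvd_rfl)
  obtain ⟨B', hB'⟩ := (hc₂ c).2 dvd_rfl
  have hBI : C.elem d (B' % A) c ∈ I := by
    have : C.elem d (B' % A) c = C.elem d B' c - (B' / A) • C.elem d A 0 := by
      rw [zsmul_elem, elem_sub, Int.emod_def]; congr 1 <;> ring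
    rw [this]
    exact sub_mem hB' (I.toAddSubgroup.zsmul_mem hAI _)
  have hA' : (0 : ℤ) < A := by exact_mod_cast hA
  lift B' % A to ℕ using Int.emod_nonneg _ hA'.ne' with B hB
  refine ⟨A, B, c, by have := Int.emod_lt_of_pos B' hA'; omega, hc, fun u v => ⟨fun h => ?_, ?_⟩⟩
  · obtain ⟨q, rfl⟩ := (hc₂ v).1 ⟨u, h⟩
    refine ⟨q, mul_comm _ _, (hA₁ _).1 ((hH₁ _).2 ?_)⟩
    have : C.elem d (u - q * B) 0 = C.elem d u (c * q) - q • C.elem d B c := by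
      rw [zsmul_elem, elem_sub]; congr 1; ring
    rw [this]
    exact sub_mem h (I.toAddSubgroup.zsmul_mem hBI _)
  · rintro ⟨q, rfl, p, hp⟩
    have : C.elem d u (q * c) = q • C.elem d B c + p • C.elem d A 0 := by
      rw [zsmul_elem, zsmul_elem, elem_add]
      congr 1
      · linear_combination hp
      · ring
    rw [this]
    exact add_mem (I.toAddSubgroup.zsmul_mem hBI _) (I.toAddSubgroup.zsmul_mem hAI _)

lemma exists_eq_hnfIdeal (hd : d ≠ 0) {I : Ideal (quadOrder K C.γ d)} {s : ℕ} (hs : 0 < s)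
    (hI : Nat.card (quadOrder K C.γ d ⧸ I) = s) :
    ∃ τ ∈ C.hnfTriples d s, C.hnfIdeal d τ.1 τ.2.1 τ.2.2 = I := by
  obtain ⟨A, B, c, hBA, hc, hmem⟩ := C.exists_elem_mem_iff (s := s) (by omega)
    (by rw [Int.cast_natCast, ← hI]; exact I.natCast_card_quotient_mem)
  -- Multiplying the generators `A` and `B + c·dγ` by `dγ` forces `c ∣ A`, `c ∣ B`, and then
  -- `a ∣ N(b + dγ)` for `a = A/c`, `b = B/c`.
  have hmul (u v : ℤ) : C.elem d 0 1 * C.elem d u v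
      = C.elem d (-(v * (d ^ 2 * C.m))) (u + v * (d * C.t)) := by
    rw [elem_mul]; congr 1 <;> ring
  obtain ⟨q, hq, -⟩ := (hmem 0 A).1 (by
    simpa [hmul] using I.mul_mem_left (C.elem d 0 1) ((hmem A 0).2 ⟨0, by simp⟩))
  obtain ⟨a, rfl⟩ : c ∣ A := Int.natCast_dvd_natCast.1 ⟨q, by linear_combination hq⟩
  obtain ⟨q', hq', r, hr⟩ := (hmem _ _).1 (by
    simpa [hmul] using I.mul_mem_left (C.elem d 0 1) ((hmem B c).2 ⟨1, by simp⟩))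
  obtain ⟨b, rfl⟩ : c ∣ B :=
    Int.natCast_dvd_natCast.1 ⟨q' - d * C.t, by linear_combination hq'⟩
  have hba : b < a := Nat.lt_of_mul_lt_mul_left hBA
  have hc' : (c : ℤ) ≠ 0 := by exact_mod_cast hc.ne'
  obtain rfl : q' = b + d * C.t :=
    mul_right_cancel₀ hc' (by push_cast at hq'; linear_combination -hq')
  have hab : (a : ℤ) ∣ C.norm d b :=
    ⟨-r, mul_left_cancel₀ hc' (by unfold norm; push_cast at hr; linear_combination -hr)⟩
  have hIeq : C.hnfIdeal d a b c = I := by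
    ext x
    obtain ⟨u, v, rfl⟩ := C.exists_eq_elem x
    rw [C.elem_mem_hnfIdeal_iff hd hab, hmem]
    push_cast
    rfl
  refine ⟨(a, b, c), ?_, hIeq⟩
  rw [← hI, ← hIeq, C.card_quotient_hnfIdeal hd hab (by omega) hc]
  exact C.mem_hnfTriples.2 ⟨hba, hc, rfl, hab⟩

lemma eq_of_hnfIdeal_eq (hd : d ≠ 0) {s a' b' c' : ℕ}
    (hτ : (a, b, c) ∈ C.hnfTriples d s) (hτ' : (a', b', c') ∈ C.hnfTriples d s)
    (h : C.hnfIdeal d a b c = C.hnfIdeal d a' b' c') : a = a' ∧ b = b' ∧ c = c' := by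
  obtain ⟨hba, hc, -, hab⟩ := C.mem_hnfTriples.1 hτ
  obtain ⟨hba', hc', -, hab'⟩ := C.mem_hnfTriples.1 hτ'
  have hmem (u v : ℤ) : (∃ q : ℤ, v = q * c ∧ (c * a : ℤ) ∣ u - q * (c * b)) ↔
      ∃ q : ℤ, v = q * c' ∧ (c' * a' : ℤ) ∣ u - q * (c' * b') := by
    rw [← C.elem_mem_hnfIdeal_iff hd hab, ← C.elem_mem_hnfIdeal_iff hd hab', h]
  obtain rfl : c = c' := by
    obtain ⟨q, hq, -⟩ := (hmem (c * b) c).1 ⟨1, by ring, by simp⟩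
    obtain ⟨q', hq', -⟩ := (hmem (c' * b') c').2 ⟨1, by ring, by simp⟩
    exact Nat.dvd_antisymm (Int.natCast_dvd_natCast.1 ⟨q', by linear_combination hq'⟩)
      (Int.natCast_dvd_natCast.1 ⟨q, by linear_combination hq⟩)
  have hc0 : (c : ℤ) ≠ 0 := by exact_mod_cast hc.ne'
  obtain rfl : a = a' := by
    obtain ⟨q, hq, hdvd⟩ := (hmem (c * a) 0).1 ⟨0, by ring, by simp⟩
    obtain ⟨q', hq', hdvd'⟩ := (hmem (c * a') 0).2 ⟨0, by ring, by simp⟩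
    obtain rfl : q = 0 := by simpa [hc.ne'] using hq.symm
    obtain rfl : q' = 0 := by simpa [hc.ne'] using hq'.symm
    simp only [zero_mul, sub_zero] at hdvd hdvd'
    exact Nat.dvd_antisymm (by exact_mod_cast (mul_dvd_mul_iff_left hc0).1 hdvd')
      (by exact_mod_cast (mul_dvd_mul_iff_left hc0).1 hdvd)
  obtain ⟨q, hq, hdvd⟩ := (hmem (c * b') c).2 ⟨1, by ring, by simp⟩
  obtain rfl : q = 1 := mul_right_cancel₀ hc0 (hq.symm.trans (one_mul _).symm)
  have hbb : b ≡ b' [MOD a] := by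
    rw [Nat.modEq_iff_dvd]
    exact (mul_dvd_mul_iff_left hc0).1 (by rw [mul_sub]; simpa using hdvd)
  exact ⟨rfl, hbb.eq_of_lt_of_lt hba hba', rfl⟩

lemma content_eq {e : ℤ} (ha : 0 < a) (he : C.norm d b = a * e) :
    C.content d a b = Int.gcd a (Int.gcd (2 * b + d * C.t) e) := by
  rw [content, he, Int.mul_ediv_cancel_left _ (by exact_mod_cast ha.ne')]

lemma content_ne_zero (ha : 0 < a) : C.content d a b ≠ 0 :=
  Int.gcd_ne_zero_left (by exact_mod_cast ha.ne')

lemma div_content_mul_mem_hnfIdeal (ha : 0 < a) (hab : (a : ℤ) ∣ C.norm d b)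
    {y : quadOrder K C.γ d} (hy : y ∈ C.hnfIdeal d a b c) :
    (b + C.gen d) / C.content d a b * (y : K) ∈
      (Subtype.val '' (C.hnfIdeal d a b c : Set (quadOrder K C.γ d)) : Set K) := by
  have := C.charZero
  obtain ⟨e, he⟩ := id hab
  obtain ⟨p, q, rfl⟩ := (C.mem_hnfIdeal_iff hab y).1 hy
  set g := C.content d a b
  have hg : g = Int.gcd a (Int.gcd (2 * b + d * C.t) e) := C.content_eq ha he
  obtain ⟨A, hA⟩ : (g : ℤ) ∣ a := hg ▸ Int.gcd_dvd_left _ _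
  obtain ⟨S, hS⟩ : (g : ℤ) ∣ 2 * b + d * C.t :=
    hg ▸ (Int.gcd_dvd_right _ _).trans (Int.gcd_dvd_left _ _)
  obtain ⟨E, hE⟩ : (g : ℤ) ∣ e := hg ▸ (Int.gcd_dvd_right _ _).trans (Int.gcd_dvd_right _ _)
  refine ⟨C.elem d (c * (-(q * E) * a + (p * A + q * S) * b)) ((p * A + q * S) * c),
    (C.mem_hnfIdeal_iff hab _).2 ⟨_, _, rfl⟩, ?_⟩
  have hgen := C.gen_mul_self d
  unfold norm at he
  have hA' := congrArg (Int.cast : ℤ → K) hA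
  have hS' := congrArg (Int.cast : ℤ → K) hS
  have hE' := congrArg (Int.cast : ℤ → K) hE
  have he' := congrArg (Int.cast : ℤ → K) he
  rw [coe_elem, coe_elem, div_mul_eq_mul_div,
    eq_div_iff (Nat.cast_ne_zero.2 (C.content_ne_zero ha))]
  push_cast at hgen hA' hS' hE' he' ⊢
  linear_combination -(p * c * b + p * c * C.gen d) * hA' - (q * c * b + q * c * C.gen d) * hS'
    + q * c * a * hE' - q * c * hgen + q * c * he'

lemma isIntegral_div_content (ha : 0 < a) (hab : (a : ℤ) ∣ C.norm d b) :
    IsIntegral ℤ ((b + C.gen d) / C.content d a b) := by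
  have := C.charZero
  let N : Submodule ℤ K := Submodule.span ℤ {(C.elem d a 0 : K), (C.elem d b 1 : K)}
  have hIN : ∀ y ∈ C.hnfIdeal d a b 1, (y : K) ∈ N := by
    intro y hy
    obtain ⟨p, q, rfl⟩ := (C.mem_hnfIdeal_iff hab y).1 hy
    have : (C.elem d (1 * (p * a + q * b)) (q * 1) : K) =
        p • (C.elem d a 0 : K) + q • (C.elem d b 1 : K) := by
      simp only [coe_elem, zsmul_eq_mul]; push_cast; ring
    rw [Nat.cast_one, this]
    exact add_mem (Submodule.smul_mem _ _ (Submodule.subset_span (by simp)))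
      (Submodule.smul_mem _ _ (Submodule.subset_span (by simp)))
  refine isIntegral_of_smul_mem_submodule N ?_ (Submodule.fg_span (Set.toFinite _)) _
    fun n hn => ?_
  · intro h
    have hmem : (C.elem d a 0 : K) ∈ N := Submodule.subset_span (by simp)
    rw [h, Submodule.mem_bot] at hmem
    simp [ha.ne'] at hmem
  induction hn using Submodule.span_induction with
  | mem y hy =>
    obtain ⟨z, hz, hzy⟩ : _ * y ∈ _ := by
      rcases hy with rfl | rfl
      exacts [C.div_content_mul_mem_hnfIdeal ha hab (c := 1) (Ideal.subset_span (by simp)),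
        C.div_content_mul_mem_hnfIdeal ha hab (c := 1) (Ideal.subset_span (by simp))]
    rw [smul_eq_mul, ← hzy]
    exact hIN z hz
  | zero => simp
  | add y z _ _ hy hz => rw [smul_add]; exact add_mem hy hz
  | smul k y _ hy => rw [smul_comm]; exact Submodule.smul_mem _ _ hy

lemma content_dvd (ha : 0 < a) (hab : (a : ℤ) ∣ C.norm d b) :
    (C.content d a b : ℤ) ∣ b ∧ (C.content d a b : ℤ) ∣ d := by
  have := C.charZero
  set g := C.content d a b
  obtain ⟨u, v, huv⟩ := (mem_adjoin_singleton_iff_of_mul_self_eq C.mul_self_eq _).1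
    (C.mem_adjoin_of_isIntegral _ (C.isIntegral_div_content ha hab))
  have := C.eq_zero_of_add_mul_eq_zero (b - g * u) (d - g * v) (by
    have : (b : K) + C.gen d = g * (u + v * C.γ) := by
      rw [← huv, mul_div_cancel₀ _ (Nat.cast_ne_zero.2 (C.content_ne_zero ha))]
    unfold gen at this
    push_cast
    linear_combination this)
  exact ⟨⟨u, by linear_combination this.1⟩, ⟨v, by linear_combination this.2⟩⟩

lemma content_eq_one_of_isInvertibleIdeal (hd : d ≠ 0) (ha : 0 < a)
    (hab : (a : ℤ) ∣ C.norm d b) (hI : IsInvertibleIdeal K C.γ d (C.hnfIdeal d a b c)) :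
    C.content d a b = 1 := by
  have := C.charZero
  set g := C.content d a b
  have hx := (isInvertibleIdeal_iff_subset _ _ _ _).1 hI
    fun y hy => C.div_content_mul_mem_hnfIdeal ha hab hy
  obtain ⟨u, v, huv⟩ := C.exists_eq_elem ⟨_, hx⟩
  have : C.elem d b 1 = C.elem d (g * u) (g * v) := by
    refine Subtype.ext ?_
    have := congrArg Subtype.val huv
    simp only [coe_elem] at this ⊢
    rw [div_eq_iff (Nat.cast_ne_zero.2 (C.content_ne_zero ha))] at this
    push_cast
    linear_combination this
  exact Nat.dvd_one.1 (Int.natCast_dvd_natCast.1 ⟨v, ((C.elem_inj hd).1 this).2⟩)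

lemma isInvertibleIdeal_hnfIdeal_of_content_eq_one (hd : d ≠ 0) (ha : 0 < a) (hc : 0 < c)
    (hab : (a : ℤ) ∣ C.norm d b) (h1 : C.content d a b = 1) :
    IsInvertibleIdeal K C.γ d (C.hnfIdeal d a b c) := by
  have := C.charZero
  obtain ⟨e, he⟩ := id hab
  rw [isInvertibleIdeal_iff_subset]
  intro x hx
  obtain ⟨z, hz, hxz⟩ := hx (C.elem d (c * a) 0) (Ideal.subset_span (by simp))
  obtain ⟨z', hz', hxz'⟩ := hx (C.elem d (c * b) c) (Ideal.subset_span (by simp))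
  obtain ⟨p, q, rfl⟩ := (C.mem_hnfIdeal_iff hab z).1 hz
  obtain ⟨p', q', rfl⟩ := (C.mem_hnfIdeal_iff hab z').1 hz'
  -- `x` carries `c·a` to `z` and `c·(b + dγ)` to `z'`; comparing `(c·a)·z'` with
  -- `z·c·(b + dγ)` gives `a ∣ q·(2b + dt)` and `a ∣ q·e`, hence `a ∣ q` and `x ∈ O_d`.
  have hcross : C.elem d (c * a) 0 * C.elem d (c * (p' * a + q' * b)) (q' * c)
      = C.elem d (c * (p * a + q * b)) (q * c) * C.elem d (c * b) c := by
    refine Subtype.ext ?_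
    simp only [Subalgebra.coe_mul]
    rw [hxz, hxz']
    ring
  rw [elem_mul, elem_mul, C.elem_inj hd] at hcross
  obtain ⟨h₁, h₂⟩ := hcross
  unfold norm at he
  have hc2 : (c : ℤ) ^ 2 ≠ 0 := by positivity
  have hqs : (a : ℤ) ∣ q * (2 * b + d * C.t) :=
    ⟨q' - p, mul_left_cancel₀ hc2 (by linear_combination -h₂)⟩
  have hqe : (a : ℤ) ∣ q * e :=
    ⟨-p', mul_left_cancel₀ (mul_ne_zero hc2 (by positivity : (a : ℤ) ≠ 0))
      (by linear_combination h₁ - b * h₂ - c ^ 2 * q * he)⟩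
  obtain ⟨r, rfl⟩ := Int.dvd_of_dvd_mul_of_gcd_gcd_eq_one (C.content_eq ha he ▸ h1) hqs hqe
  have hα : (C.elem d (c * a) 0 : K) ≠ 0 := by simp [hc.ne', ha.ne']
  refine (C.mem_quadOrder_iff d x).2 ⟨p + r * b, r, mul_right_cancel₀ hα ?_⟩
  rw [← hxz]
  simp only [coe_elem]
  push_cast
  ring

lemma isInvertibleIdeal_hnfIdeal_iff (hd : d ≠ 0) {s : ℕ} (hτ : (a, b, c) ∈ C.hnfTriples d s) :
    IsInvertibleIdeal K C.γ d (C.hnfIdeal d a b c) ↔ C.content d a b = 1 := by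
  obtain ⟨hba, hc, -, hab⟩ := C.mem_hnfTriples.1 hτ
  exact ⟨C.content_eq_one_of_isInvertibleIdeal hd (by omega) hab,
    C.isInvertibleIdeal_hnfIdeal_of_content_eq_one hd (by omega) hc hab⟩

lemma card_ideals_eq_card_filter (hd : d ≠ 0) {s : ℕ} (hs : 0 < s)
    (P : Ideal (quadOrder K C.γ d) → Prop) (p : ℕ → Prop) [DecidablePred p]
    (hP : ∀ a b c, (a, b, c) ∈ C.hnfTriples d s →
      (P (C.hnfIdeal d a b c) ↔ p (C.content d a b))) :
    Nat.card {I : Ideal (quadOrder K C.γ d) // P I ∧ Nat.card (quadOrder K C.γ d ⧸ I) = s} =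
      #{τ ∈ C.hnfTriples d s | p (C.content d τ.1 τ.2.1)} := by
  have hmap : ∀ τ ∈ {τ ∈ C.hnfTriples d s | p (C.content d τ.1 τ.2.1)},
      P (C.hnfIdeal d τ.1 τ.2.1 τ.2.2) ∧
        Nat.card (quadOrder K C.γ d ⧸ C.hnfIdeal d τ.1 τ.2.1 τ.2.2) = s := by
    rintro ⟨a, b, c⟩ hτ
    obtain ⟨hT, hp⟩ := mem_filter.1 hτ
    obtain ⟨hba, hc, rfl, hab⟩ := C.mem_hnfTriples.1 hT
    exact ⟨(hP a b c hT).2 hp, C.card_quotient_hnfIdeal hd hab (by omega) hc⟩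
  rw [← Nat.card_eq_finsetCard]
  refine (Nat.card_eq_of_bijective (fun τ => ⟨_, hmap τ.1 τ.2⟩) ⟨?_, ?_⟩).symm
  · rintro ⟨⟨a, b, c⟩, hτ⟩ ⟨⟨a', b', c'⟩, hτ'⟩ h
    obtain ⟨rfl, rfl, rfl⟩ := C.eq_of_hnfIdeal_eq hd (mem_filter.1 hτ).1 (mem_filter.1 hτ').1
      (congrArg Subtype.val h)
    rfl
  · rintro ⟨I, hPI, hI⟩
    obtain ⟨⟨a, b, c⟩, hT, rfl⟩ := C.exists_eq_hnfIdeal hd hs hI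
    exact ⟨⟨(a, b, c), mem_filter.2 ⟨hT, (hP a b c hT).1 hPI⟩⟩, rfl⟩

lemma iG_eq_card (hd : 0 < d) {ℓ : ℕ} (hℓ : 0 < ℓ) (n : ℕ) :
    iG K C.γ d ℓ n = #{τ ∈ C.hnfTriples d (ℓ ^ n) | C.content d τ.1 τ.2.1 = 1} :=
  C.card_ideals_eq_card_filter hd.ne' (pow_pos hℓ n) (IsInvertibleIdeal K C.γ d) (· = 1)
    fun _ _ _ hτ => C.isInvertibleIdeal_hnfIdeal_iff hd.ne' hτ

lemma niG_eq_card (hd : 0 < d) {ℓ : ℕ} (hℓ : 0 < ℓ) (n : ℕ) :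
    niG K C.γ d ℓ n = #{τ ∈ C.hnfTriples d (ℓ ^ n) | C.content d τ.1 τ.2.1 ≠ 1} :=
  C.card_ideals_eq_card_filter hd.ne' (pow_pos hℓ n) (¬ IsInvertibleIdeal K C.γ d ·) (· ≠ 1)
    fun _ _ _ hτ => not_congr (C.isInvertibleIdeal_hnfIdeal_iff hd.ne' hτ)

lemma norm_mul_mul (e : ℕ) (b : ℤ) : C.norm (e * d) (e * b) = e ^ 2 * C.norm d b := by
  unfold norm; push_cast; ring

variable {e : ℕ}

lemma content_mul_mul (he : 0 < e) (ha : 0 < a) (hab : (a : ℤ) ∣ C.norm d b) :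
    C.content (e * d) (e * a) (e * b) = e * C.content d a b := by
  obtain ⟨E, hE⟩ := hab
  rw [C.content_eq ha hE, C.content_eq (e := e * E) (by positivity) (by
    push_cast; rw [C.norm_mul_mul, hE]; ring)]
  push_cast
  rw [show (2 * (e * b) + e * d * C.t : ℤ) = e * (2 * b + d * C.t) by ring,
    Int.gcd_mul_left, Int.natAbs_natCast]
  push_cast
  rw [Int.gcd_mul_left, Int.natAbs_natCast]

lemma card_filter_content_eq_mul (he : 0 < e) {s : ℕ} :
    #{τ ∈ C.hnfTriples (e * d) (e * s) | C.content (e * d) τ.1 τ.2.1 = e} =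
      #{τ ∈ C.hnfTriples d s | C.content d τ.1 τ.2.1 = 1} := by
  symm
  refine card_bij (fun τ _ => (e * τ.1, e * τ.2.1, τ.2.2)) ?_ ?_ ?_
  · rintro ⟨a, b, c⟩ hτ
    simp only [mem_filter, mem_hnfTriples] at hτ ⊢
    obtain ⟨⟨hba, hc, rfl, hab⟩, h1⟩ := hτ
    refine ⟨⟨by gcongr, hc, by ring, ?_⟩, by rw [C.content_mul_mul he (by omega) hab, h1, mul_one]⟩
    push_cast
    rw [C.norm_mul_mul, sq, mul_assoc]
    exact mul_dvd_mul_left _ (hab.mul_left _)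
  · rintro ⟨a, b, c⟩ - ⟨a', b', c'⟩ - h
    simp only [Prod.mk.injEq, mul_right_inj' he.ne'] at h
    rw [h.1, h.2.1, h.2.2]
  · rintro ⟨A, B, c⟩ hτ
    simp only [mem_filter, mem_hnfTriples] at hτ
    obtain ⟨⟨hBA, hc, hs, hAB⟩, hg⟩ := hτ
    have hA : 0 < A := by omega
    obtain ⟨a, rfl⟩ : e ∣ A := Int.natCast_dvd_natCast.1 (hg ▸ Int.gcd_dvd_left _ _)
    obtain ⟨b, rfl⟩ : e ∣ B := Int.natCast_dvd_natCast.1 (hg ▸ (C.content_dvd hA hAB).1)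
    obtain ⟨F, hF⟩ := hAB
    obtain ⟨E, rfl⟩ : (e : ℤ) ∣ F := by
      rw [← hg, C.content_eq hA hF]
      exact (Int.gcd_dvd_right _ _).trans (Int.gcd_dvd_right _ _)
    have he2 : (e : ℤ) ^ 2 ≠ 0 := by positivity
    have hab : (a : ℤ) ∣ C.norm d b := ⟨E, mul_left_cancel₀ he2 (by
      push_cast at hF; rw [C.norm_mul_mul] at hF; linear_combination hF)⟩
    refine ⟨(a, b, c), ?_, rfl⟩
    simp only [mem_filter, mem_hnfTriples]
    refine ⟨⟨Nat.lt_of_mul_lt_mul_left hBA, hc, ?_, hab⟩, ?_⟩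
    · exact Nat.eq_of_mul_eq_mul_left he (by rw [← hs]; ring)
    · rw [C.content_mul_mul he (Nat.pos_of_mul_pos_left hA) hab] at hg
      exact (Nat.mul_eq_left he.ne').1 hg

variable {f ℓ : ℕ} [hℓ : Fact ℓ.Prime]

lemma filter_content_ne_one_eq_biUnion (hf : 0 < f) (n : ℕ) :
    {τ ∈ C.hnfTriples f (ℓ ^ n) | C.content f τ.1 τ.2.1 ≠ 1} =
      (Icc 1 (min n (padicValNat ℓ f))).biUnion
        fun k => {τ ∈ C.hnfTriples f (ℓ ^ n) | C.content f τ.1 τ.2.1 = ℓ ^ k} := by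
  ext ⟨a, b, c⟩
  simp only [mem_filter, mem_biUnion, mem_Icc]
  constructor
  · rintro ⟨hτ, h1⟩
    obtain ⟨hba, -, hs, hab⟩ := C.mem_hnfTriples.1 hτ
    have hga : C.content f a b ∣ a := Int.natCast_dvd_natCast.1 (Int.gcd_dvd_left _ _)
    obtain ⟨k, hkn, hk⟩ := (Nat.dvd_prime_pow hℓ.out).1 (hga.trans ⟨c ^ 2, by rw [← hs]; ring⟩)
    have hkf : ℓ ^ k ∣ f := hk ▸ Int.natCast_dvd_natCast.1 (C.content_dvd (by omega) hab).2
    refine ⟨k, ⟨Nat.one_le_iff_ne_zero.2 ?_, le_min hkn ((padicValNat_dvd_iff_le hf.ne').1 hkf)⟩,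
      hτ, hk⟩
    rintro rfl
    exact h1 hk
  · rintro ⟨k, ⟨hk1, -⟩, hτ, hk⟩
    exact ⟨hτ, hk ▸ (Nat.one_lt_pow (by omega) hℓ.out.one_lt).ne'⟩

lemma card_filter_content_ne_one_eq_sum (hf : 0 < f) (n : ℕ) :
    #{τ ∈ C.hnfTriples f (ℓ ^ n) | C.content f τ.1 τ.2.1 ≠ 1} =
      ∑ k ∈ Icc 1 (min n (padicValNat ℓ f)),
        #{τ ∈ C.hnfTriples (f / ℓ ^ k) (ℓ ^ (n - k)) | C.content (f / ℓ ^ k) τ.1 τ.2.1 = 1} := by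
  rw [C.filter_content_ne_one_eq_biUnion hf, card_biUnion]
  · refine sum_congr rfl fun k hk => ?_
    obtain ⟨-, hk⟩ := mem_Icc.1 hk
    rw [← C.card_filter_content_eq_mul (pow_pos hℓ.out.pos k),
      Nat.mul_div_cancel' ((padicValNat_dvd_iff_le hf.ne').2 (hk.trans (min_le_right _ _))),
      ← pow_add, Nat.add_sub_cancel' (hk.trans (min_le_left _ _))]
  · intro k _ k' _ hkk'
    exact disjoint_filter.2 fun τ _ h h' =>
      hkk' (Nat.pow_right_injective hℓ.out.two_le (h.symm.trans h'))

end QuadGenerator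

section NumberField

variable {K : Type} [Field K] [NumberField K] {γ : K}

lemma notMem_range_algebraMap_of_finrank_eq_two (hdeg : Module.finrank ℚ K = 2)
    (hγ : ∀ x : K, IsIntegral ℤ x → x ∈ Algebra.adjoin ℤ {γ}) : γ ∉ (algebraMap ℚ K).range := by
  intro hγℚ
  have hint (x : K) (hx : IsIntegral ℤ x) : x ∈ (⊥ : Subalgebra ℚ K) :=
    Algebra.adjoin_le (S := (⊥ : Subalgebra ℚ K).restrictScalars ℤ)
      (Set.singleton_subset_iff.2 (Algebra.mem_bot.2 hγℚ)) (hγ x hx)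
  have htop : (⊥ : Subalgebra ℚ K) = ⊤ := by
    have hspan : Submodule.span ℚ (Set.range (NumberField.integralBasis K)) ≤
        Subalgebra.toSubmodule ⊥ := by
      rw [Submodule.span_le]
      rintro _ ⟨i, rfl⟩
      rw [NumberField.integralBasis_apply]
      exact hint _ (NumberField.RingOfIntegers.isIntegral_coe _)
    exact Algebra.eq_top_iff.2 fun x => hspan ((NumberField.integralBasis K).mem_span x)
  have := Subalgebra.bot_eq_top_iff_finrank_eq_one.1 htop
  omega

lemma exists_mul_self_eq_of_finrank_eq_two (hdeg : Module.finrank ℚ K = 2)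
    (hγℚ : γ ∉ (algebraMap ℚ K).range) (hint : IsIntegral ℤ γ) :
    ∃ t m : ℤ, γ * γ = t * γ - m := by
  have hdegℚ : (minpoly ℚ γ).natDegree = 2 :=
    le_antisymm (hdeg ▸ minpoly.natDegree_le γ)
      ((minpoly.two_le_natDegree_iff (IsIntegral.of_finite ℚ γ)).2 hγℚ)
  have hdegℤ : (minpoly ℤ γ).natDegree = 2 := by
    rwa [minpoly.isIntegrallyClosed_eq_field_fractions' ℚ hint,
      Polynomial.natDegree_map_eq_of_injective (algebraMap ℤ ℚ).injective_int] at hdegℚ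
  have hlead : (minpoly ℤ γ).coeff 2 = 1 := hdegℤ ▸ (minpoly.monic hint).coeff_natDegree
  have h := minpoly.aeval ℤ γ
  rw [Polynomial.aeval_eq_sum_range, hdegℤ, Finset.sum_range_succ, Finset.sum_range_succ,
    Finset.sum_range_one, hlead] at h
  refine ⟨-(minpoly ℤ γ).coeff 1, (minpoly ℤ γ).coeff 0, ?_⟩
  simp only [zsmul_eq_mul, pow_zero, pow_one, mul_one, one_mul, Int.cast_one] at h
  push_cast
  linear_combination h

lemma eq_zero_of_add_mul_eq_zero_of_notMem_range (hγℚ : γ ∉ (algebraMap ℚ K).range) (u v : ℤ)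
    (h : (u : K) + v * γ = 0) : u = 0 ∧ v = 0 := by
  obtain rfl | hv := eq_or_ne v 0
  · simpa using h
  · refine absurd ⟨-u / v, ?_⟩ hγℚ
    rw [map_div₀, map_neg, map_intCast, map_intCast, div_eq_iff (Int.cast_ne_zero.2 hv)]
    linear_combination -h

lemma QuadGenerator.exists_γ_eq (hdeg : Module.finrank ℚ K = 2)
    (hγ : ∀ x : K, IsIntegral ℤ x ↔ x ∈ Algebra.adjoin ℤ {γ}) :
    ∃ C : QuadGenerator K, C.γ = γ := by
  have hγℚ := notMem_range_algebraMap_of_finrank_eq_two hdeg fun x => (hγ x).1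
  obtain ⟨t, m, h⟩ := exists_mul_self_eq_of_finrank_eq_two hdeg hγℚ
    ((hγ γ).2 (Algebra.self_mem_adjoin_singleton ℤ γ))
  exact ⟨⟨γ, t, m, h, eq_zero_of_add_mul_eq_zero_of_notMem_range hγℚ, fun x => (hγ x).1⟩, rfl⟩

end NumberField

theorem count_noninvertible_ideals_of_prime_power_norm_general
    (K : Type) [Field K] [NumberField K]
    (hdeg : Module.finrank ℚ K = 2)
    (γ : K) (hγ : ∀ x : K, IsIntegral ℤ x ↔ x ∈ Algebra.adjoin ℤ {γ})
    (f : ℕ) (hf : 0 < f) (ℓ : ℕ) (hℓ : Fact ℓ.Prime) (n : ℕ) :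
    niG K γ f ℓ n =
      ∑ k ∈ Finset.Icc 1 (min n (padicValNat ℓ f)), iG K γ (f / ℓ ^ k) ℓ (n - k) := by
  obtain ⟨C, rfl⟩ := QuadGenerator.exists_γ_eq hdeg hγ
  rw [C.niG_eq_card hf hℓ.out.pos, C.card_filter_content_ne_one_eq_sum hf]
  refine Finset.sum_congr rfl fun k hk => (C.iG_eq_card ?_ hℓ.out.pos _).symm
  have hkf : ℓ ^ k ∣ f :=
    (padicValNat_dvd_iff_le hf.ne').2 ((Finset.mem_Icc.1 hk).2.trans (min_le_right _ _))
  exact Nat.div_pos (Nat.le_of_dvd hf hkf) (pow_pos hℓ.out.pos k)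

/-- Appendix B of the paper.  Let `K` be an imaginary
quadratic field of discriminant `D` with ring of integers `ℤ[γ]`, where
`γ ≠ √-1` and `γ ≠ (1+√-3)/2` (equivalently, `D ≠ -4` and `D ≠ -3`).  Let `f`
be a positive integer, `ℓ` a prime dividing `f`, and `v_ℓ(f)` the `ℓ`-adic
valuation of `f`.  Then the number `niG(f, ℓ^n)` of non-invertible ideals of
norm `ℓ^n` in the order `ℤ + ℤfγ` satisfies
`niG(f, ℓ^n) = Σ_{1 ≤ k ≤ min(n, v_ℓ(f))} iG(f/ℓ^k, ℓ^{n-k})`,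
where `iG(f', ℓ^m)` is the number of invertible ideals of norm `ℓ^m` in the
order of conductor `f'`.  (The convention that the number of invertible ideals
of norm `1` is `1` holds by definition here, the unit ideal being the unique
ideal of norm `1` and being invertible.) -/
theorem count_noninvertible_ideals_of_prime_power_norm
    (K : Type) [Field K] [NumberField K]
    (hdeg : Module.finrank ℚ K = 2) (himag : IsEmpty (K →+* ℝ))
    (γ : K) (hγ : ∀ x : K, IsIntegral ℤ x ↔ x ∈ Algebra.adjoin ℤ {γ})
    (hD3 : NumberField.discr K ≠ -3) (hD4 : NumberField.discr K ≠ -4)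
    (f : ℕ) (hf : 0 < f) (ℓ : ℕ) (hℓ : Fact ℓ.Prime) (hlf : ℓ ∣ f) (n : ℕ) :
    niG K γ f ℓ n =
      ∑ k ∈ Finset.Icc 1 (min n (padicValNat ℓ f)), iG K γ (f / ℓ ^ k) ℓ (n - k) :=
  count_noninvertible_ideals_of_prime_power_norm_general K hdeg γ hγ f hf ℓ hℓ n
end

section
/- Let τ1 and τ2 be complex numbers in the upper half plane, neither of which is contained in any imaginary quadratic field, and set L1 = ℤ + ℤτ1 and L2 = ℤ + ℤτ2. If there exists a nonzero complex number α with αL1 ⊆ L2, then ℚ(τ1) = ℚ(τ2). -/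
open Complex

/-- The lattice `L = ℤ + ℤτ` in `ℂ`. -/
def lattice (τ : ℂ) : Set ℂ := {z | ∃ m n : ℤ, z = (m : ℂ) + (n : ℂ) * τ}

/-- `τ` lies in an imaginary quadratic field: there is a subfield of `ℂ` of
degree `2` over `ℚ` which is not contained in `ℝ` (i.e. is imaginary) and
contains `τ`. -/
def InImaginaryQuadraticField (τ : ℂ) : Prop :=
  ∃ K : IntermediateField ℚ ℂ, Module.finrank ℚ K = 2 ∧
    (∃ x ∈ K, (x : ℂ).im ≠ 0) ∧ τ ∈ K

lemma lin_mem (m n : ℤ) (τ : ℂ) : (m : ℂ) + (n : ℂ) * τ ∈ IntermediateField.adjoin ℚ {τ} := by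
  have hτ : τ ∈ IntermediateField.adjoin ℚ {τ} := IntermediateField.mem_adjoin_simple_self ℚ τ
  exact add_mem (intCast_mem _ m) (mul_mem (intCast_mem _ n) hτ)

/-- Appendix A of the paper.  Let `τ₁` and `τ₂` be complex
numbers in the upper half plane, neither of which is contained in any imaginary
quadratic field, and set `L₁ = ℤ + ℤτ₁` and `L₂ = ℤ + ℤτ₂`.  If there exists a
nonzero complex number `α` with `αL₁ ⊆ L₂`, then `ℚ(τ₁) = ℚ(τ₂)`. -/
theorem adjoin_eq_of_lattice_map
    (τ₁ τ₂ : ℂ) (h₁ : 0 < τ₁.im) (h₂ : 0 < τ₂.im)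
    (hq₁ : ¬ InImaginaryQuadraticField τ₁)
    (hq₂ : ¬ InImaginaryQuadraticField τ₂)
    (α : ℂ) (hα : α ≠ 0)
    (hmap : ∀ z ∈ lattice τ₁, α * z ∈ lattice τ₂) :
    IntermediateField.adjoin ℚ {τ₁} = IntermediateField.adjoin ℚ {τ₂} := by
  obtain ⟨a, b, hab⟩ := hmap 1 ⟨1, 0, by push_cast; ring⟩
  rw [mul_one] at hab
  obtain ⟨c, d, hcd⟩ := hmap τ₁ ⟨0, 1, by push_cast; ring⟩
  -- bτ₁ - d ≠ 0
  have hbd : (b : ℂ) * τ₁ - d ≠ 0 := by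
    intro h
    have hb : (b : ℂ) = 0 := by
      by_contra hb
      have hbz : b ≠ 0 := by exact_mod_cast hb
      have him : (b : ℝ) * τ₁.im = 0 := by
        have := congrArg Complex.im h
        simpa using this
      rcases mul_eq_zero.mp him with h' | h'
      · exact hbz (by exact_mod_cast h')
      · exact h₁.ne' h'
    have hd : (d : ℂ) = 0 := by
      rw [hb, zero_mul, zero_sub, neg_eq_zero] at h
      exact h
    rw [hb, zero_mul, add_zero] at hab
    rw [hd, zero_mul, add_zero] at hcd
    have ha : (a : ℂ) ≠ 0 := hab ▸ hα
    have hτ₁ : τ₁ = (c : ℂ) / a := by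
      field_simp
      rw [mul_comm, ← hab, hcd]
    have : τ₁.im = 0 := by
      rw [hτ₁, Complex.div_im]
      simp
    exact h₁.ne' this
  have hτ₂ : τ₂ = ((b : ℂ) * τ₁ - d)⁻¹ * ((c : ℂ) - a * τ₁) := by
    rw [hab] at hcd
    field_simp
    linear_combination hcd
  have hτ₁ : τ₁ = ((a : ℂ) + b * τ₂)⁻¹ * ((c : ℂ) + d * τ₂) := by
    rw [← hab, ← hcd]
    field_simp
  apply le_antisymm
  · rw [IntermediateField.adjoin_simple_le_iff]
    rw [hτ₁]
    exact mul_mem (inv_mem (lin_mem a b τ₂)) (lin_mem c d τ₂)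
  · rw [IntermediateField.adjoin_simple_le_iff]
    rw [hτ₂]
    refine mul_mem (inv_mem (sub_mem ?_ (intCast_mem _ d))) (sub_mem (intCast_mem _ c) ?_)
    · exact mul_mem (intCast_mem _ b) (IntermediateField.mem_adjoin_simple_self ℚ τ₁)
    · exact mul_mem (intCast_mem _ a) (IntermediateField.mem_adjoin_simple_self ℚ τ₁)
end
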